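/- For each n ∈ ℕ let Z_n be the set of sequences a ∈ {-1,1}^{2^n} such that: a₁ = −a₂ if n = 1; a₁ = a₂ if n ≠ 1; a_{2^{l−1}+1} = … = a_{2^l} for all l < n; and a_{2^{n−1}+1} = … = a_{2^n−1} = −a_{2^n}. Let U = ⋃_{n∈ℕ} ⋃_{s∈Z_n} ⟨s⟩ ⊆ C. Then U is open but not closed, and U is (2^n, 2^{n+2}/2^{2^n})-balanced for every n ∈ ℕ; in particular U is a balanced Borel subset of C which is not clopen. -/

import Mathlib

/-!
`U` is a union of cylinders, hence open. The constant sequence `1` is not in `U`, but it is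
the limit of the points of `U` equal to `1` everywhere except at position `2^k - 1`, so `U` is
not closed.

Fix `s` of length `2^n`. For `r > 2^n`, flipping every coordinate of the dyadic block
`[2^k, 2^(k+1))` containing `r` preserves the Haar measure, `U` and `⟨s⟩`, and changes the sign
of `x_r`; hence `φ_r(U ∩ ⟨s⟩) = 0`. If `⟨s⟩ ⊄ U`, a point of `U ∩ ⟨s⟩` lies in a cylinder of
some `Z_k` with `k > n`, so its block `[2^n, 2^(n+1))` is `b…b¬b` (when `k = n + 1`), or that
block is constant and the next one is constant except possibly at its last position. This
leaves one free bit among `2^n` new positions, or three among `3·2^n`, so that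
`λ(U ∩ ⟨s⟩) ≤ (2·2^(-2^n) + 8·2^(-3·2^n)) λ⟨s⟩ < 4·2^(-2^n) λ⟨s⟩`.
-/

open MeasureTheory Set Filter Topology
open scoped ENNReal

noncomputable section

/-- The Cantor set `{-1,1}^ℕ`, coded with `Bool` (`true ↔ 1`, `false ↔ -1`). -/
abbrev Cantor : Type := ℕ → Bool

/-- `δ_n(x) = x_n ∈ {-1,1}`. -/
def delta (n : ℕ) (x : Cantor) : ℝ := if x n then 1 else -1

/-- The cylinder `⟨s⟩ = {x : x↾m = s}`. -/
def cyl {m : ℕ} (s : Fin m → Bool) : Set Cantor := {x | ∀ i : Fin m, x i.1 = s i}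

/-- `φ_n(A) = ∫_A δ_n dμ`. -/
def phi (μ : Measure Cantor) (n : ℕ) (A : Set Cantor) : ℝ := ∫ x in A, delta n x ∂μ

/-- `μ` is the Haar (fair-coin product) measure on the Cantor set:
every cylinder of length `m` has measure `2^{-m}`. -/
def IsHaar (μ : Measure Cantor) : Prop :=
  ∀ (m : ℕ) (s : Fin m → Bool), μ (cyl s) = (2 : ℝ≥0∞)⁻¹ ^ m

/-- `A` is `(t,ε)`-semibalanced: `|φ_r(A)| < ε/r` for all `r > t`. -/
def Semibalanced (μ : Measure Cantor) (t : ℕ) (ε : ℝ) (A : Set Cantor) : Prop :=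
  ∀ r : ℕ, t < r → |phi μ r A| < ε / (r : ℝ)

/-- `A` is `(m,ε)`-balanced. -/
def BalancedAt (μ : Measure Cantor) (m : ℕ) (ε : ℝ) (A : Set Cantor) : Prop :=
  ∀ s : Fin m → Bool,
    ((μ (A ∩ cyl s)).toReal / (μ (cyl s)).toReal < ε / (m : ℝ) ∨
      (μ (cyl s \ A)).toReal / (μ (cyl s)).toReal < ε / (m : ℝ)) ∧
    ∀ r : ℕ, m < r → |phi μ r (A ∩ cyl s)| / (μ (cyl s)).toReal < ε / (r : ℝ)

/-- `A` is `(m,t,ε)`-balanced. -/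
def BalancedAtT (μ : Measure Cantor) (m t : ℕ) (ε : ℝ) (A : Set Cantor) : Prop :=
  ∀ s : Fin m → Bool,
    ((μ (A ∩ cyl s)).toReal / (μ (cyl s)).toReal < ε / (m : ℝ) ∨
      (μ (cyl s \ A)).toReal / (μ (cyl s)).toReal < ε / (m : ℝ)) ∧
    ∀ r : ℕ, m < r → r ≤ t → |phi μ r (A ∩ cyl s)| / (μ (cyl s)).toReal < ε / (r : ℝ)

/-- `s ∈ Z_n`: the conditions on a sequence `a = (a₁,…,a_{2^n}) ∈ {-1,1}^{2^n}`
(written `0`-indexed, `Bool`-coded): (1) `a₁ = -a₂` if `n = 1`; (2) `a₁ = a₂` if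
`n ≠ 1`; (3) for `1 ≤ l < n`, `a_{2^{l-1}+1} = ⋯ = a_{2^l}`;
(4) `a_{2^{n-1}+1} = ⋯ = a_{2^n-1} = -a_{2^n}`. -/
def inZ (n : ℕ) (s : Fin (2 ^ n) → Bool) : Prop :=
  (n = 1 → ∀ i j : Fin (2 ^ n), i.1 = 0 → j.1 = 1 → s i = ! s j) ∧
  (n ≠ 1 → ∀ i j : Fin (2 ^ n), i.1 = 0 → j.1 = 1 → s i = s j) ∧
  (∀ l : ℕ, 1 ≤ l → l < n → ∀ i j : Fin (2 ^ n),
    2 ^ (l - 1) ≤ i.1 → i.1 < 2 ^ l → 2 ^ (l - 1) ≤ j.1 → j.1 < 2 ^ l → s i = s j) ∧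
  (∀ i j : Fin (2 ^ n), 2 ^ (n - 1) ≤ i.1 → i.1 < 2 ^ n - 1 →
    2 ^ (n - 1) ≤ j.1 → j.1 < 2 ^ n - 1 → s i = s j) ∧
  (∀ i j : Fin (2 ^ n), 2 ^ (n - 1) ≤ i.1 → i.1 < 2 ^ n - 1 → j.1 = 2 ^ n - 1 →
    s i = ! s j)

/-- The open set `U = ⋃_{n≥1} ⋃_{s ∈ Z_n} ⟨s⟩`. -/
def Uset : Set Cantor :=
  ⋃ (n : ℕ) (_ : 1 ≤ n) (s : Fin (2 ^ n) → Bool) (_ : inZ n s), cyl s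


section

variable {μ ν : Measure Cantor}

section Cylinders

lemma cyl_eq_iInter {m : ℕ} (s : Fin m → Bool) :
    cyl s = ⋂ i : Fin m, (fun x : Cantor => x i) ⁻¹' {s i} := by
  ext x
  simp [cyl]

lemma measurableSet_cyl {m : ℕ} (s : Fin m → Bool) : MeasurableSet (cyl s) := by
  rw [cyl_eq_iInter]
  exact .iInter fun i => measurable_pi_apply _ (.singleton _)

lemma isOpen_cyl {m : ℕ} (s : Fin m → Bool) : IsOpen (cyl s) := by
  rw [cyl_eq_iInter]
  exact isOpen_iInter_of_finite fun i =>
    (continuous_apply _).isOpen_preimage _ (isOpen_discrete _)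

lemma cyl_inter_eq_right {m m' : ℕ} (h : m ≤ m') (s : Fin m → Bool) (t : Fin m' → Bool)
    (hst : (cyl s ∩ cyl t).Nonempty) : cyl s ∩ cyl t = cyl t := by
  obtain ⟨x, hxs, hxt⟩ := hst
  refine inter_eq_right.2 fun y hy i => ?_
  have hi : i.1 < m' := i.2.trans_le h
  rw [hy ⟨i, hi⟩, ← hxt ⟨i, hi⟩, hxs i]

def prefixCylinders : Set (Set Cantor) := {A | ∃ (m : ℕ) (s : Fin m → Bool), A = cyl s}

lemma isPiSystem_prefixCylinders : IsPiSystem prefixCylinders := by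
  rintro _ ⟨m, s, rfl⟩ _ ⟨m', t, rfl⟩ hst
  rcases le_total m m' with h | h
  · exact ⟨m', t, cyl_inter_eq_right h s t hst⟩
  · rw [inter_comm] at hst ⊢
    exact ⟨m, s, cyl_inter_eq_right h t s hst⟩

lemma preimage_eval_singleton_eq_iUnion_cyl (i : ℕ) (b : Bool) :
    (fun x : Cantor => x i) ⁻¹' {b} =
      ⋃ (s : Fin (i + 1) → Bool) (_ : s (Fin.last i) = b), cyl s := by
  ext x
  simp only [mem_preimage, mem_singleton_iff, mem_iUnion, cyl, mem_ofPred_eq, exists_prop]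
  exact ⟨fun hx => ⟨fun j => x j, hx, fun _ => rfl⟩, fun ⟨s, hs, hxs⟩ => (hxs _).trans hs⟩

lemma measurableSpace_eq_generateFrom_prefixCylinders :
    (inferInstance : MeasurableSpace Cantor) = .generateFrom prefixCylinders := by
  refine le_antisymm ?_ ?_
  · refine iSup_le fun i => measurable_iff_comap_le.1 ?_
    refine @measurable_to_countable' _ _ _ _ (.generateFrom _) _ fun b => ?_
    rw [preimage_eval_singleton_eq_iUnion_cyl]
    exact .iUnion fun s => .iUnion fun _ => .basic _ ⟨_, s, rfl⟩
  · rw [MeasurableSpace.generateFrom_le_iff]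
    rintro _ ⟨m, s, rfl⟩
    exact measurableSet_cyl s

end Cylinders

namespace IsHaar

lemma isProbabilityMeasure (hμ : IsHaar μ) : IsProbabilityMeasure μ :=
  ⟨by simpa [cyl] using hμ 0 Fin.elim0⟩

lemma unique (hμ : IsHaar μ) (hν : IsHaar ν) : μ = ν := by
  have := hμ.isProbabilityMeasure
  have := hν.isProbabilityMeasure
  refine ext_of_generate_finite _ measurableSpace_eq_generateFrom_prefixCylinders
    isPiSystem_prefixCylinders ?_ (by simp)
  rintro _ ⟨m, s, rfl⟩
  rw [hμ, hν]

lemma measure_le_of_agree (hμ : IsHaar μ) {A : Set Cantor} {L : ℕ}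
    (hA : ∀ x ∈ A, ∀ y ∈ A, ∀ i < L, x i = y i) : μ A ≤ 2⁻¹ ^ L := by
  rcases A.eq_empty_or_nonempty with rfl | ⟨x, hx⟩
  · simp
  calc μ A ≤ μ (cyl fun i : Fin L => x i) := measure_mono fun y hy i => hA y hy x hx i i.2
    _ = 2⁻¹ ^ L := hμ _ _

lemma measure_le_of_determined (hμ : IsHaar μ) {A : Set Cantor} (L : ℕ) (I : Finset ℕ)
    (hA : ∀ x ∈ A, ∀ y ∈ A, (∀ i ∈ I, x i = y i) → ∀ i < L, x i = y i) :
    μ A ≤ 2 ^ I.card * 2⁻¹ ^ L := by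
  have hcover : A ⊆ ⋃ g : I → Bool, {x ∈ A | ∀ i : I, x i = g i} := fun x hx =>
    mem_iUnion.2 ⟨fun i => x i, hx, fun _ => rfl⟩
  calc μ A ≤ ∑ g : I → Bool, μ {x ∈ A | ∀ i : I, x i = g i} :=
        (measure_mono hcover).trans (measure_iUnion_fintype_le _ _)
    _ ≤ ∑ _g : I → Bool, (2⁻¹ : ℝ≥0∞) ^ L := by
        refine Finset.sum_le_sum fun g _ => hμ.measure_le_of_agree ?_
        rintro x ⟨hx, hxg⟩ y ⟨hy, hyg⟩
        exact hA x hx y hy fun i hi => (hxg ⟨i, hi⟩).trans (hyg ⟨i, hi⟩).symm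
    _ = 2 ^ I.card * 2⁻¹ ^ L := by simp

end IsHaar

section Flip

def flipMap (c : ℕ → Bool) (x : Cantor) : Cantor := fun i => xor (c i) (x i)

lemma flipMap_involutive (c : ℕ → Bool) : Function.Involutive (flipMap c) := fun x => by
  funext i
  simp [flipMap]

lemma measurable_flipMap (c : ℕ → Bool) : Measurable (flipMap c) :=
  measurable_pi_iff.2 fun i =>
    (measurable_from_top (f := xor (c i))).comp (measurable_pi_apply i)

lemma flipMap_preimage_cyl (c : ℕ → Bool) {m : ℕ} (s : Fin m → Bool) :
    flipMap c ⁻¹' cyl s = cyl fun i : Fin m => xor (c i) (s i) := by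
  ext x
  simp only [mem_preimage, cyl, mem_ofPred_eq, flipMap]
  refine forall_congr' fun i => ?_
  cases c i <;> simp

lemma IsHaar.measurePreserving_flipMap (hμ : IsHaar μ) (c : ℕ → Bool) :
    MeasurePreserving (flipMap c) μ μ := by
  refine ⟨measurable_flipMap c, IsHaar.unique (fun m s => ?_) hμ⟩
  rw [Measure.map_apply (measurable_flipMap c) (measurableSet_cyl s), flipMap_preimage_cyl, hμ]

lemma IsHaar.phi_eq_zero_of_flipMap_preimage (hμ : IsHaar μ) {c : ℕ → Bool} {r : ℕ}
    (hcr : c r = true) {A : Set Cantor} (hA : flipMap c ⁻¹' A = A) : phi μ r A = 0 := by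
  let e := MeasurableEquiv.ofInvolutive _ (flipMap_involutive c) (measurable_flipMap c)
  have hneg : ∀ x, delta r (flipMap c x) = -delta r x := fun x => by
    simp only [delta, flipMap, hcr]
    cases x r <;> simp
  have h := (hμ.measurePreserving_flipMap c).setIntegral_preimage_emb e.measurableEmbedding
    (delta r) A
  simp only [hA, hneg, integral_neg] at h
  rw [phi]
  linarith

end Flip

section Uset

lemma mem_Uset_iff {x : Cantor} :
    x ∈ Uset ↔ ∃ n, 1 ≤ n ∧ inZ n fun i : Fin (2 ^ n) => x i := by
  simp only [Uset, mem_iUnion, cyl, mem_ofPred_eq, exists_prop]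
  constructor
  · rintro ⟨n, hn, s, hs, hxs⟩
    exact ⟨n, hn, (funext hxs : (fun i : Fin (2 ^ n) => x i) = s) ▸ hs⟩
  · rintro ⟨n, hn, hs⟩
    exact ⟨n, hn, _, hs, fun _ => rfl⟩

lemma isOpen_Uset : IsOpen Uset :=
  isOpen_iUnion fun _ => isOpen_iUnion fun _ => isOpen_iUnion fun s => isOpen_iUnion fun _ =>
    isOpen_cyl s

lemma log_two_eq_of_mem_block {l i : ℕ} (hl : 1 ≤ l) (h₁ : 2 ^ (l - 1) ≤ i)
    (h₂ : i < 2 ^ l) : Nat.log 2 i = l - 1 :=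
  Nat.log_eq_of_pow_le_of_lt_pow h₁ (by rwa [Nat.sub_add_cancel hl])

/-- Each condition defining `Z_n` compares two coordinates in the same block `{0, 1}` or
`[2^l, 2^(l+1))`, i.e. with the same `Nat.log 2`. -/
lemma inZ_xor {c : ℕ → Bool} (hc : ∀ i j, Nat.log 2 i = Nat.log 2 j → c i = c j) {n : ℕ}
    {s : Fin (2 ^ n) → Bool} (h : inZ n s) : inZ n fun i => xor (c i) (s i) := by
  obtain ⟨h₁, h₂, h₃, h₄, h₅⟩ := h
  have heq : ∀ i j : Fin (2 ^ n), Nat.log 2 i = Nat.log 2 j → s i = s j →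
      xor (c i) (s i) = xor (c j) (s j) := fun i j hij hs => by rw [hc _ _ hij, hs]
  have hne : ∀ i j : Fin (2 ^ n), Nat.log 2 i = Nat.log 2 j → s i = !s j →
      xor (c i) (s i) = !xor (c j) (s j) := fun i j hij hs => by rw [hc _ _ hij, hs]; simp
  have hlog01 : ∀ i j : Fin (2 ^ n), i.1 = 0 → j.1 = 1 → Nat.log 2 i = Nat.log 2 j :=
    fun i j hi hj => by simp [hi, hj]
  have hn : ∀ i : Fin (2 ^ n), i.1 < 2 ^ n - 1 → 1 ≤ n := fun i hi => by
    rcases n with _ | n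
    · simp at hi
    · omega
  refine ⟨fun hn1 i j hi hj => hne i j (hlog01 i j hi hj) (h₁ hn1 i j hi hj),
    fun hn1 i j hi hj => heq i j (hlog01 i j hi hj) (h₂ hn1 i j hi hj),
    fun l hl hln i j hi hi' hj hj' => heq i j ?_ (h₃ l hl hln i j hi hi' hj hj'),
    fun i j hi hi' hj hj' => heq i j ?_ (h₄ i j hi hi' hj hj'),
    fun i j hi hi' hj => hne i j ?_ (h₅ i j hi hi' hj)⟩
  · rw [log_two_eq_of_mem_block hl hi hi', log_two_eq_of_mem_block hl hj hj']
  · rw [log_two_eq_of_mem_block (hn i hi') hi (by omega),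
      log_two_eq_of_mem_block (hn i hi') hj (by omega)]
  · have h1n := hn i hi'
    rw [log_two_eq_of_mem_block h1n hi (by omega), log_two_eq_of_mem_block h1n ?_ (by omega)]
    have : 2 ^ n = 2 * 2 ^ (n - 1) := by rw [← pow_succ', Nat.sub_add_cancel h1n]
    omega

lemma flipMap_preimage_Uset {c : ℕ → Bool}
    (hc : ∀ i j, Nat.log 2 i = Nat.log 2 j → c i = c j) : flipMap c ⁻¹' Uset = Uset := by
  have hmaps : MapsTo (flipMap c) Uset Uset := fun x hx => by
    obtain ⟨n, hn, hxn⟩ := mem_Uset_iff.1 hx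
    exact mem_Uset_iff.2 ⟨n, hn, inZ_xor hc hxn⟩
  refine Subset.antisymm (fun x hx => ?_) hmaps
  simpa only [flipMap_involutive c x] using hmaps hx

lemma IsHaar.phi_Uset_inter_cyl (hμ : IsHaar μ) {n r : ℕ} (s : Fin (2 ^ n) → Bool)
    (hr : 2 ^ n < r) : phi μ r (Uset ∩ cyl s) = 0 := by
  let c : ℕ → Bool := fun i => Nat.log 2 i = Nat.log 2 r
  have hlog : ∀ i < 2 ^ n, Nat.log 2 i < Nat.log 2 r := fun i hi => by
    have hr1 : Nat.log 2 r ≠ 0 := (Nat.log_pos one_lt_two (by omega)).ne'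
    refine Nat.log_lt_of_lt_pow' hr1 (hi.trans_le ?_)
    exact Nat.pow_le_pow_right two_pos (Nat.le_log_of_pow_le one_lt_two hr.le)
  refine hμ.phi_eq_zero_of_flipMap_preimage (c := c) (by simp [c]) ?_
  rw [preimage_inter, flipMap_preimage_Uset fun i j h => by simp [c, h], flipMap_preimage_cyl]
  congr 2
  funext i
  simp [c, (hlog i i.2).ne]

end Uset

section MeasureBound

def IsConstOn (x : Cantor) (a b : ℕ) : Prop := ∀ i, a ≤ i → i < b → x i = x a

lemma IsConstOn.mono {x : Cantor} {a b b' : ℕ} (h : IsConstOn x a b) (hb : b' ≤ b) :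
    IsConstOn x a b' := fun i hi hi' => h i hi (hi'.trans_le hb)

lemma IsConstOn.eq_of_eq {x y : Cantor} {a b : ℕ} (hx : IsConstOn x a b)
    (hy : IsConstOn y a b) (hxy : x a = y a) {i : ℕ} (hi : a ≤ i) (hi' : i < b) : x i = y i := by
  rw [hx i hi hi', hy i hi hi', hxy]

lemma inZ.isConstOn_block {x : Cantor} {n m : ℕ} (h : inZ n fun i : Fin (2 ^ n) => x i)
    (hm : m + 1 < n) : IsConstOn x (2 ^ m) (2 ^ (m + 1)) := fun i hi hi' => by
  have hle : 2 ^ (m + 1) ≤ 2 ^ n := Nat.pow_le_pow_right two_pos hm.le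
  have hpow : 2 ^ (m + 1) = 2 * 2 ^ m := pow_succ' 2 m
  have := h.2.2.1 (m + 1) (by omega) hm ⟨i, by omega⟩ ⟨2 ^ m, by omega⟩
  simp only [Nat.add_sub_cancel] at this
  exact this hi hi' le_rfl (by omega)

lemma inZ.isConstOn_lastBlock {x : Cantor} {m : ℕ} (hm : 1 ≤ m)
    (h : inZ (m + 1) fun i : Fin (2 ^ (m + 1)) => x i) :
    IsConstOn x (2 ^ m) (2 ^ (m + 1) - 1) ∧ x (2 ^ m) = !x (2 ^ (m + 1) - 1) := by
  have h2m : 2 ≤ 2 ^ m := Nat.le_self_pow (by omega) 2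
  have hpow : 2 ^ (m + 1) = 2 * 2 ^ m := pow_succ' 2 m
  obtain ⟨-, -, -, h₄, h₅⟩ := h
  simp only [Nat.add_sub_cancel] at h₄ h₅
  exact ⟨fun i hi hi' => h₄ ⟨i, by omega⟩ ⟨2 ^ m, by omega⟩ hi hi' le_rfl
      (show 2 ^ m < 2 ^ (m + 1) - 1 by omega),
    h₅ ⟨2 ^ m, by omega⟩ ⟨2 ^ (m + 1) - 1, by omega⟩ le_rfl
      (show 2 ^ m < 2 ^ (m + 1) - 1 by omega) rfl⟩

lemma Uset_inter_cyl_subset {n : ℕ} (hn : 1 ≤ n) {s : Fin (2 ^ n) → Bool}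
    (hs : ¬ cyl s ⊆ Uset) :
    Uset ∩ cyl s ⊆
      {x ∈ cyl s | IsConstOn x (2 ^ n) (2 ^ (n + 1) - 1) ∧ x (2 ^ n) = !x (2 ^ (n + 1) - 1)} ∪
      {x ∈ cyl s | IsConstOn x (2 ^ n) (2 ^ (n + 1)) ∧
        IsConstOn x (2 ^ (n + 1)) (2 ^ (n + 2) - 1)} := by
  rintro x ⟨hxU, hxs⟩
  obtain ⟨k, hk, hx⟩ := mem_Uset_iff.1 hxU
  obtain hkn | rfl | hkn : k ≤ n ∨ k = n + 1 ∨ n + 2 ≤ k := by omega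
  · refine absurd (fun y hy => mem_Uset_iff.2 ⟨k, hk, ?_⟩) hs
    have hxy : (fun i : Fin (2 ^ k) => y i) = fun i : Fin (2 ^ k) => x i :=
      funext fun i => by
        have hi : i.1 < 2 ^ n := i.2.trans_le (Nat.pow_le_pow_right two_pos hkn)
        exact (hy ⟨i, hi⟩).trans (hxs ⟨i, hi⟩).symm
    rwa [hxy]
  · exact Or.inl ⟨hxs, hx.isConstOn_lastBlock hn⟩
  · refine Or.inr ⟨hxs, hx.isConstOn_block (by omega), ?_⟩
    rcases hkn.eq_or_lt with rfl | hkn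
    · exact (hx.isConstOn_lastBlock (by omega)).1
    · exact (hx.isConstOn_block hkn).mono (Nat.sub_le _ _)

lemma IsHaar.measure_flipBlock_le (hμ : IsHaar μ) {n : ℕ} (s : Fin (2 ^ n) → Bool) :
    μ {x ∈ cyl s | IsConstOn x (2 ^ n) (2 ^ (n + 1) - 1) ∧ x (2 ^ n) = !x (2 ^ (n + 1) - 1)} ≤
      2 * 2⁻¹ ^ 2 ^ (n + 1) := by
  refine (hμ.measure_le_of_determined (2 ^ (n + 1)) {2 ^ n} ?_).trans_eq (by simp)
  rintro x ⟨hxs, hx, hx'⟩ y ⟨hys, hy, hy'⟩ hxy i hi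
  have h₀ := hxy _ (Finset.mem_singleton_self _)
  obtain hi₀ | hi₀ := lt_or_ge i (2 ^ n)
  · exact (hxs ⟨i, hi₀⟩).trans (hys ⟨i, hi₀⟩).symm
  obtain hi₁ | rfl : i < 2 ^ (n + 1) - 1 ∨ i = 2 ^ (n + 1) - 1 := by omega
  · exact hx.eq_of_eq hy h₀ hi₀ hi₁
  · exact Bool.not_inj (hx'.symm.trans (h₀.trans hy'))

lemma IsHaar.measure_constBlocks_le (hμ : IsHaar μ) {n : ℕ} (s : Fin (2 ^ n) → Bool) :
    μ {x ∈ cyl s | IsConstOn x (2 ^ n) (2 ^ (n + 1)) ∧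
        IsConstOn x (2 ^ (n + 1)) (2 ^ (n + 2) - 1)} ≤ 8 * 2⁻¹ ^ 2 ^ (n + 2) := by
  have hcard : (2 : ℝ≥0∞) ^ ({2 ^ n, 2 ^ (n + 1), 2 ^ (n + 2) - 1} : Finset ℕ).card ≤ 8 :=
    (pow_le_pow_right₀ one_le_two Finset.card_le_three).trans_eq (by norm_num)
  refine (hμ.measure_le_of_determined _ {2 ^ n, 2 ^ (n + 1), 2 ^ (n + 2) - 1} ?_).trans
    (mul_le_mul_left hcard _)
  rintro x ⟨hxs, hx, hx'⟩ y ⟨hys, hy, hy'⟩ hxy i hi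
  simp only [Finset.mem_insert, Finset.mem_singleton, forall_eq_or_imp, forall_eq] at hxy
  obtain ⟨h₀, h₁, h₂⟩ := hxy
  obtain hi₀ | hi₀ := lt_or_ge i (2 ^ n)
  · exact (hxs ⟨i, hi₀⟩).trans (hys ⟨i, hi₀⟩).symm
  obtain hi₁ | hi₁ := lt_or_ge i (2 ^ (n + 1))
  · exact hx.eq_of_eq hy h₀ hi₀ hi₁
  obtain hi₂ | rfl : i < 2 ^ (n + 2) - 1 ∨ i = 2 ^ (n + 2) - 1 := by omega
  · exact hx'.eq_of_eq hy' h₁ hi₁ hi₂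
  · exact h₂

lemma IsHaar.measure_Uset_inter_cyl_le (hμ : IsHaar μ) {n : ℕ} (hn : 1 ≤ n)
    {s : Fin (2 ^ n) → Bool} (hs : ¬ cyl s ⊆ Uset) :
    μ (Uset ∩ cyl s) ≤ 2 * 2⁻¹ ^ 2 ^ (n + 1) + 8 * 2⁻¹ ^ 2 ^ (n + 2) :=
  (measure_mono (Uset_inter_cyl_subset hn hs)).trans <| (measure_union_le _ _).trans <|
    add_le_add (hμ.measure_flipBlock_le s) (hμ.measure_constBlocks_le s)

end MeasureBound

section Balanced

lemma BalancedAt.mono {m : ℕ} {ε ε' : ℝ} {A : Set Cantor} (h : BalancedAt μ m ε A)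
    (hε : ε ≤ ε') : BalancedAt μ m ε' A := fun s =>
  have hdiv : ∀ k : ℕ, ε / k ≤ ε' / k := fun k => div_le_div_of_nonneg_right hε k.cast_nonneg
  ⟨(h s).1.imp (·.trans_le (hdiv m)) (·.trans_le (hdiv m)),
    fun r hr => ((h s).2 r hr).trans_le (hdiv r)⟩

lemma IsHaar.balancedAt_Uset (hμ : IsHaar μ) {n : ℕ} (hn : 1 ≤ n) :
    BalancedAt μ (2 ^ n) ((2 : ℝ) ^ (n + 2) / 2 ^ 2 ^ n) Uset := by
  set Y : ℝ := 2⁻¹ ^ 2 ^ n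
  have hY : 0 < Y := by positivity
  have hY4 : Y ≤ 4⁻¹ := by
    calc Y ≤ 2⁻¹ ^ 2 := pow_le_pow_of_le_one (by norm_num) (by norm_num)
          (Nat.le_self_pow (by omega) 2)
      _ = 4⁻¹ := by norm_num
  have hε : (2 : ℝ) ^ (n + 2) / 2 ^ 2 ^ n / ((2 ^ n : ℕ) : ℝ) = 4 * Y := by
    simp only [Y, inv_pow, pow_add]
    push_cast
    field_simp
    norm_num
  intro s
  have hcyl : (μ (cyl s)).toReal = Y := by simp [hμ _ s, Y]
  rw [hcyl, hε]
  refine ⟨?_, fun r hr => ?_⟩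
  · by_cases hs : cyl s ⊆ Uset
    · right
      simp [sdiff_eq_empty.2 hs, hY]
    · left
      have hle := ENNReal.toReal_mono (by finiteness) (hμ.measure_Uset_inter_cyl_le hn hs)
      rw [ENNReal.toReal_add (by finiteness) (by finiteness)] at hle
      simp only [ENNReal.toReal_mul, ENNReal.toReal_ofNat, ENNReal.toReal_pow, ENNReal.toReal_inv]
        at hle
      rw [pow_succ, pow_mul, pow_add, pow_mul] at hle
      change _ ≤ 2 * Y ^ 2 + 8 * Y ^ 4 at hle
      have hY2 : Y ^ 2 ≤ 16⁻¹ := by nlinarith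
      rw [div_lt_iff₀ hY]
      nlinarith [mul_le_mul_of_nonneg_left hY2 (sq_nonneg Y)]
  · rw [hμ.phi_Uset_inter_cyl s hr, abs_zero, zero_div]
    exact div_pos (by positivity) (Nat.cast_pos.2 (Nat.zero_lt_of_lt hr))

lemma tendsto_two_pow_div_two_pow_two_pow :
    Tendsto (fun n : ℕ => (2 : ℝ) ^ (n + 2) / 2 ^ 2 ^ n) atTop (𝓝 0) := by
  have h := ((tendsto_pow_const_div_const_pow_of_one_lt 1 one_lt_two).comp
    (tendsto_pow_atTop_atTop_of_one_lt one_lt_two)).const_mul 4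
  rw [mul_zero] at h
  refine h.congr fun n => ?_
  simp only [Function.comp_apply]
  push_cast
  ring

lemma IsHaar.exists_balancedAt_Uset (hμ : IsHaar μ) {ε : ℝ} (hε : 0 < ε) :
    ∃ m : ℕ, BalancedAt μ m ε Uset := by
  obtain ⟨n, hn, hnε⟩ := ((eventually_ge_atTop 1).and
    (tendsto_two_pow_div_two_pow_two_pow.eventually (gt_mem_nhds hε))).exists
  exact ⟨2 ^ n, (hμ.balancedAt_Uset hn).mono hnε.le⟩

end Balanced

section NotClosed

lemma const_true_notMem_Uset : (fun _ => true : Cantor) ∉ Uset := fun h => by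
  obtain ⟨n, hn, h₁, -, -, -, h₅⟩ := mem_Uset_iff.1 h
  have h2n : 2 ≤ 2 ^ n := Nat.le_self_pow (by omega) 2
  rcases eq_or_ne n 1 with rfl | hn1
  · simpa using h₁ rfl ⟨0, by omega⟩ ⟨1, by omega⟩ rfl rfl
  · have hpow : 2 ^ n = 2 * 2 ^ (n - 1) := by rw [← pow_succ', Nat.sub_add_cancel hn]
    have h4 : 4 ≤ 2 ^ n := Nat.pow_le_pow_right two_pos (by omega : 2 ≤ n)
    simpa using h₅ ⟨2 ^ (n - 1), by omega⟩ ⟨2 ^ n - 1, by omega⟩ le_rfl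
      (show 2 ^ (n - 1) < 2 ^ n - 1 by omega) rfl

lemma mem_Uset_of_ne_two_pow_sub_one {n : ℕ} (hn : 1 ≤ n) :
    (fun i => decide (i ≠ 2 ^ n - 1) : Cantor) ∈ Uset := by
  have h2n : 2 ≤ 2 ^ n := Nat.le_self_pow (by omega) 2
  have hpow : 2 ^ n = 2 * 2 ^ (n - 1) := by rw [← pow_succ', Nat.sub_add_cancel hn]
  refine mem_Uset_iff.2 ⟨n, hn, fun hn1 i j hi hj => ?_, fun hn1 i j hi hj => ?_,
    fun l hl hln i j hi hi' hj hj' => ?_, fun i j hi hi' hj hj' => ?_, fun i j hi hi' hj => ?_⟩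
  · subst hn1
    rw [← decide_not, decide_eq_decide]
    omega
  · have h4 : 4 ≤ 2 ^ n := Nat.pow_le_pow_right two_pos (by omega : 2 ≤ n)
    rw [decide_eq_decide]
    omega
  · have hl : 2 ^ l ≤ 2 ^ (n - 1) := Nat.pow_le_pow_right two_pos (by omega)
    rw [decide_eq_decide]
    omega
  · rw [decide_eq_decide]
    omega
  · rw [← decide_not, decide_eq_decide]
    omega

lemma not_isClosed_Uset : ¬ IsClosed Uset := fun h => by
  refine const_true_notMem_Uset (h.mem_of_tendsto (tendsto_pi_nhds.2 fun i => ?_)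
    ((eventually_ge_atTop 1).mono fun n hn => mem_Uset_of_ne_two_pow_sub_one hn))
  refine tendsto_const_nhds.congr' ((eventually_gt_atTop i).mono fun n hn => ?_)
  have : n < 2 ^ n := Nat.lt_two_pow_self
  exact (decide_eq_true (by omega)).symm

end NotClosed

end

theorem stmt17_general (μ : Measure Cantor) (hμ : IsHaar μ) :
    IsOpen Uset ∧ ¬ IsClosed Uset ∧
    (∀ n : ℕ, 1 ≤ n →
      BalancedAt μ (2 ^ n) ((2 : ℝ) ^ (n + 2) / 2 ^ (2 ^ n)) Uset) ∧
    (∀ ε : ℝ, 0 < ε → ∃ m : ℕ, BalancedAt μ m ε Uset) ∧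
    MeasurableSet Uset ∧ ¬ IsClopen Uset :=
  ⟨isOpen_Uset, not_isClosed_Uset, fun _ => hμ.balancedAt_Uset,
    fun _ => hμ.exists_balancedAt_Uset, isOpen_Uset.measurableSet,
    fun h => not_isClosed_Uset h.isClosed⟩

/-- `U` is open but not closed, and `(2^n, 2^{n+2}/2^{2^n})`-balanced for every
`n ≥ 1`; in particular `U` is a balanced Borel set which is not clopen. -/
theorem stmt17 (μ : Measure Cantor) [IsProbabilityMeasure μ] (hμ : IsHaar μ) :
    IsOpen Uset ∧ ¬ IsClosed Uset ∧
    (∀ n : ℕ, 1 ≤ n →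
      BalancedAt μ (2 ^ n) ((2 : ℝ) ^ (n + 2) / 2 ^ (2 ^ n)) Uset) ∧
    (∀ ε : ℝ, 0 < ε → ∃ m : ℕ, BalancedAt μ m ε Uset) ∧
    MeasurableSet Uset ∧ ¬ IsClopen Uset :=
  stmt17_general μ hμ
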